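/- A finite simple graph G is König-Egerváry if and only if |diadem(G)| + |nucleus(G)| = 2α(G). -/

import Mathlib

open Set

variable {V : Type*} [Fintype V]

/-- `S` is an independent set in `G`: no two of its vertices are adjacent. -/
def IsIndep (G : SimpleGraph V) (S : Set V) : Prop :=
  ∀ u ∈ S, ∀ v ∈ S, ¬ G.Adj u v

/-- The neighborhood `N(X)` of a set of vertices. -/
def nbhd (G : SimpleGraph V) (X : Set V) : Set V := {v | ∃ u ∈ X, G.Adj u v}

/-- The difference `d(X) = |X| - |N(X)|` computed in the induced subgraph `G[W]`
(neighborhoods are intersected with `W`). -/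
noncomputable def dOn (G : SimpleGraph V) (W X : Set V) : ℤ :=
  (X.ncard : ℤ) - ((nbhd G X ∩ W).ncard : ℤ)

/-- The difference `d(X) = |X| - |N(X)|` in `G`. -/
noncomputable def dG (G : SimpleGraph V) (X : Set V) : ℤ := dOn G Set.univ X

/-- `S` is a critical independent set of the induced subgraph `G[W]`:
it is an independent subset of `W` whose difference attains
`max {d(Y) : Y ⊆ W}` (the critical difference of `G[W]`). -/
def IsCritIndepOn (G : SimpleGraph V) (W S : Set V) : Prop :=
  S ⊆ W ∧ IsIndep G S ∧ ∀ Y ⊆ W, dOn G W Y ≤ dOn G W S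

/-- `S` is a critical independent set of `G`. -/
def IsCritIndep (G : SimpleGraph V) (S : Set V) : Prop := IsCritIndepOn G Set.univ S

/-- A maximum critical independent set of `G[W]`: a critical independent set of
largest cardinality. -/
def IsMaxCritIndepOn (G : SimpleGraph V) (W S : Set V) : Prop :=
  IsCritIndepOn G W S ∧ ∀ T, IsCritIndepOn G W T → T.ncard ≤ S.ncard

/-- A maximum critical independent set of `G`. -/
def IsMaxCritIndep (G : SimpleGraph V) (S : Set V) : Prop := IsMaxCritIndepOn G Set.univ S

/-- A maximum independent set of the induced subgraph `G[W]`. -/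
def IsMaxIndepOn (G : SimpleGraph V) (W S : Set V) : Prop :=
  S ⊆ W ∧ IsIndep G S ∧ ∀ T ⊆ W, IsIndep G T → T.ncard ≤ S.ncard

/-- A maximum independent set of `G`. -/
def IsMaxIndep (G : SimpleGraph V) (S : Set V) : Prop := IsMaxIndepOn G Set.univ S

/-- The independence number of the induced subgraph `G[W]`. -/
noncomputable def alphaOn (G : SimpleGraph V) (W : Set V) : ℕ :=
  sSup {n | ∃ S ⊆ W, IsIndep G S ∧ S.ncard = n}

/-- The independence number `α(G)`. -/
noncomputable def alpha (G : SimpleGraph V) : ℕ := alphaOn G Set.univ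

/-- The maximum matching number `μ(G)`. -/
noncomputable def mu (G : SimpleGraph V) : ℕ :=
  sSup {n | ∃ M : G.Subgraph, M.IsMatching ∧ M.edgeSet.ncard = n}

/-- `G` is a König-Egerváry graph: `α(G) + μ(G) = |V(G)|`. -/
def IsKE (G : SimpleGraph V) : Prop := alpha G + mu G = Fintype.card V

/-- `nucleus(G[W])`: intersection of all maximum critical independent sets of `G[W]`. -/
def nucleusOn (G : SimpleGraph V) (W : Set V) : Set V := ⋂₀ {S | IsMaxCritIndepOn G W S}

/-- `nucleus(G)`. -/
def nucleus (G : SimpleGraph V) : Set V := nucleusOn G Set.univ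

/-- `diadem(G[W])`: union of all maximum critical independent sets of `G[W]`. -/
def diademOn (G : SimpleGraph V) (W : Set V) : Set V := ⋃₀ {S | IsMaxCritIndepOn G W S}

/-- `diadem(G)`. -/
def diadem (G : SimpleGraph V) : Set V := diademOn G Set.univ

/-- `ker(G)`: intersection of all critical independent sets of `G`. -/
def kerG (G : SimpleGraph V) : Set V := ⋂₀ {S | IsCritIndep G S}

/-- `core(G)`: intersection of all maximum independent sets of `G`. -/
def core (G : SimpleGraph V) : Set V := ⋂₀ {S | IsMaxIndep G S}

/-- `corona(G)`: union of all maximum independent sets of `G`. -/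
def corona (G : SimpleGraph V) : Set V := ⋃₀ {S | IsMaxIndep G S}

/-!
The difference `d` is supermodular, so critical sets are closed under unions and the diadem `D`
is critical; by Hall's theorem `N(X)` is matched into `X` whenever `X` is critical. Every
maximum critical independent set `S` satisfies `D \ N(D) ⊆ S ⊆ D`, which makes
`nucleus = D \ N(D)`, and the matchings of `N(D)` into `D` and of `N(S)` into `S` show
`|S ∩ N(D)| = |(D ∩ N(D)) \ S|`. Hence `|D| + |nucleus| = 2|S|`. Finally, `2μ ≤ |Xᶜ| + |N(X)|`
for every `X` gives `d(X) ≤ n - 2μ`, so `G` is König-Egerváry iff `|S| = α` (Larson): a maximum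
independent set of a König-Egerváry graph attains this bound, and conversely a critical
independent `S` of size `α` dominates `G` and `N(S)` is matched into `S`.
-/

section
variable {V : Type*} {G : SimpleGraph V}

lemma nbhd_mono {X Y : Set V} (h : X ⊆ Y) : nbhd G X ⊆ nbhd G Y :=
  fun _ ⟨u, hu, huv⟩ => ⟨u, h hu, huv⟩

lemma nbhd_union (X Y : Set V) : nbhd G (X ∪ Y) = nbhd G X ∪ nbhd G Y := by
  ext v
  simp only [nbhd, mem_union, mem_ofPred_eq, or_and_right, exists_or]

lemma IsIndep.disjoint_nbhd {S : Set V} (hS : IsIndep G S) : Disjoint S (nbhd G S) :=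
  disjoint_left.2 fun v hv ⟨u, hu, huv⟩ => hS u hu v hv huv

lemma IsIndep.union {S T : Set V} (hS : IsIndep G S) (hT : IsIndep G T)
    (hST : Disjoint T (nbhd G S)) : IsIndep G (S ∪ T) := by
  rintro u (hu | hu) v (hv | hv) huv
  · exact hS u hu v hv huv
  · exact disjoint_left.1 hST hv ⟨u, hu, huv⟩
  · exact disjoint_left.1 hST hu ⟨v, hv, huv.symm⟩
  · exact hT u hu v hv huv

lemma dG_eq (X : Set V) : dG G X = X.ncard - (nbhd G X).ncard := by
  simp [dG, dOn]

def IsCrit (G : SimpleGraph V) (X : Set V) : Prop := ∀ Y, dG G Y ≤ dG G X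

lemma isCritIndep_iff {S : Set V} : IsCritIndep G S ↔ IsIndep G S ∧ IsCrit G S :=
  ⟨fun ⟨_, hS, hc⟩ => ⟨hS, fun Y => hc Y (subset_univ Y)⟩,
    fun ⟨hS, hc⟩ => ⟨subset_univ S, hS, fun Y _ => hc Y⟩⟩

lemma IsMaxCritIndep.subset_diadem {S : Set V} (hS : IsMaxCritIndep G S) : S ⊆ diadem G :=
  fun _ hv => ⟨S, hS, hv⟩

variable [Finite V]

lemma dG_add_dG_le_dG_union_add_dG_inter (X Y : Set V) :
    dG G X + dG G Y ≤ dG G (X ∪ Y) + dG G (X ∩ Y) := by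
  have hcard := ncard_union_add_ncard_inter X Y
  have hnbhd := ncard_union_add_ncard_inter (nbhd G X) (nbhd G Y)
  have hinter : (nbhd G (X ∩ Y)).ncard ≤ (nbhd G X ∩ nbhd G Y).ncard :=
    ncard_le_ncard (subset_inter (nbhd_mono inter_subset_left) (nbhd_mono inter_subset_right))
  simp only [dG_eq, nbhd_union]
  omega

lemma IsCrit.union {X Y : Set V} (hX : IsCrit G X) (hY : IsCrit G Y) : IsCrit G (X ∪ Y) :=
  fun Z => by linarith [dG_add_dG_le_dG_union_add_dG_inter (G := G) X Y, hX (X ∩ Y), hY Z]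

lemma IsCrit.sUnion {F : Set (Set V)} (hne : F.Nonempty) (hF : ∀ X ∈ F, IsCrit G X) :
    IsCrit G (⋃₀ F) := by
  obtain ⟨X₀, hX₀⟩ := hne
  have key : IsCrit G (X₀ ∪ ⋃₀ F) := by
    refine Finite.induction_on_subset (motive := fun t _ => IsCrit G (X₀ ∪ ⋃₀ t)) F
      (toFinite F) (by simpa using hF X₀ hX₀) fun {X t} hX _ _ ih => ?_
    rw [sUnion_insert, union_left_comm]
    exact (hF X hX).union ih
  rwa [union_eq_right.2 (subset_sUnion_of_mem hX₀)] at key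

lemma exists_isCrit (G : SimpleGraph V) : ∃ X, IsCrit G X := by
  obtain ⟨X, hX⟩ := Finite.exists_max (dG G)
  exact ⟨X, hX⟩

lemma IsCrit.isCritIndep_diff_nbhd {X : Set V} (hX : IsCrit G X) :
    IsCritIndep G (X \ nbhd G X) := by
  have hindep : IsIndep G (X \ nbhd G X) := fun u hu v hv huv => hv.2 ⟨u, hu.1, huv⟩
  have hnbhd : nbhd G (X \ nbhd G X) ⊆ nbhd G X \ (X ∩ nbhd G X) :=
    fun v hv => ⟨nbhd_mono sdiff_subset hv, fun hvX => by
      obtain ⟨u, hu, huv⟩ := hv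
      exact hu.2 ⟨v, hvX.1, huv.symm⟩⟩
  have hle := ncard_le_ncard hnbhd
  have hX' := ncard_inter_add_ncard_sdiff_eq_ncard X (nbhd G X)
  have hN := ncard_sdiff_add_ncard_of_subset (inter_subset_right (s := X) (t := nbhd G X))
  refine isCritIndep_iff.2 ⟨hindep, fun Y => (hX Y).trans ?_⟩
  simp only [dG_eq]
  omega

lemma exists_isMaxCritIndep (G : SimpleGraph V) : ∃ S, IsMaxCritIndep G S := by
  obtain ⟨X, hX⟩ := exists_isCrit G
  have : Nonempty {S // IsCritIndep G S} := ⟨⟨_, hX.isCritIndep_diff_nbhd⟩⟩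
  obtain ⟨⟨S, hS⟩, hmax⟩ := Finite.exists_max fun S : {S // IsCritIndep G S} => S.1.ncard
  exact ⟨S, hS, fun T hT => hmax ⟨T, hT⟩⟩

lemma IsCrit.ncard_le_ncard_nbhd_inter {X A : Set V} (hX : IsCrit G X) (hA : A ⊆ nbhd G X) :
    A.ncard ≤ (nbhd G A ∩ X).ncard := by
  have hnbhd : nbhd G (X \ nbhd G A) ⊆ nbhd G X \ A :=
    fun v hv => ⟨nbhd_mono sdiff_subset hv, fun hvA => by
      obtain ⟨u, hu, huv⟩ := hv
      exact hu.2 ⟨v, hvA, huv.symm⟩⟩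
  have hle := ncard_le_ncard hnbhd
  have hN := ncard_sdiff_add_ncard_of_subset hA
  have hX' := ncard_inter_add_ncard_sdiff_eq_ncard X (nbhd G A)
  have hcrit := hX (X \ nbhd G A)
  rw [inter_comm]
  simp only [dG_eq] at hcrit
  omega

lemma IsCrit.exists_injOn_nbhd {X : Set V} (hX : IsCrit G X) :
    ∃ f : V → V, InjOn f (nbhd G X) ∧ ∀ a ∈ nbhd G X, f a ∈ X ∧ G.Adj a (f a) := by
  classical
  have := Fintype.ofFinite V
  let t (a : nbhd G X) : Finset V := {v | G.Adj a v ∧ v ∈ X}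
  have hall (s : Finset (nbhd G X)) : s.card ≤ (s.biUnion t).card := by
    set A := Subtype.val '' (s : Set (nbhd G X))
    have hsub : nbhd G A ∩ X ⊆ (s.biUnion t : Finset V) := by
      rintro v ⟨⟨_, ⟨a, ha, rfl⟩, hav⟩, hvX⟩
      exact Finset.mem_biUnion.2 ⟨a, ha, by simp [t, hav, hvX]⟩
    calc s.card = A.ncard := by
          rw [ncard_image_of_injective _ Subtype.val_injective, ncard_coe_finset]
      _ ≤ (nbhd G A ∩ X).ncard := hX.ncard_le_ncard_nbhd_inter (by simp [A, image_subset_iff])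
      _ ≤ (s.biUnion t).card := by
          rw [← ncard_coe_finset]
          exact ncard_le_ncard hsub
  obtain ⟨f, hinj, hf⟩ := (Finset.all_card_le_biUnion_card_iff_exists_injective t).1 hall
  refine ⟨fun v => if h : v ∈ nbhd G X then f ⟨v, h⟩ else v, fun a ha b hb hab => ?_,
    fun a ha => ?_⟩
  · simp only [dif_pos ha, dif_pos hb] at hab
    exact congrArg Subtype.val (hinj hab)
  · simpa [dif_pos ha, t, and_comm] using hf ⟨a, ha⟩

lemma isCrit_diadem (G : SimpleGraph V) : IsCrit G (diadem G) := by
  obtain ⟨S, hS⟩ := exists_isMaxCritIndep G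
  exact IsCrit.sUnion ⟨S, hS⟩ fun X hX => (isCritIndep_iff.1 hX.1).2

lemma IsMaxCritIndep.subset_of_isIndep_union {S T : Set V} (hS : IsMaxCritIndep G S)
    (hT : IsCritIndep G T) (hST : IsIndep G (S ∪ T)) : T ⊆ S := by
  have hcrit : IsCritIndep G (S ∪ T) :=
    isCritIndep_iff.2 ⟨hST, (isCritIndep_iff.1 hS.1).2.union (isCritIndep_iff.1 hT).2⟩
  have hunion : S = S ∪ T := eq_of_subset_of_ncard_le subset_union_left (hS.2 _ hcrit)
  exact hunion ▸ subset_union_right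

lemma IsMaxCritIndep.diadem_diff_nbhd_subset {S : Set V} (hS : IsMaxCritIndep G S) :
    diadem G \ nbhd G (diadem G) ⊆ S := by
  have hT := (isCrit_diadem G).isCritIndep_diff_nbhd
  refine hS.subset_of_isIndep_union hT <|
    (isCritIndep_iff.1 hS.1).1.union (isCritIndep_iff.1 hT).1 <|
    disjoint_left.2 fun v hv hvS => hv.2 (nbhd_mono hS.subset_diadem hvS)

lemma nucleus_eq_diadem_diff_nbhd (G : SimpleGraph V) :
    nucleus G = diadem G \ nbhd G (diadem G) := by
  refine Subset.antisymm (fun v hv => ?_)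
    fun v hv S (hS : IsMaxCritIndep G S) => hS.diadem_diff_nbhd_subset hv
  obtain ⟨S, hS⟩ := exists_isMaxCritIndep G
  refine ⟨hS.subset_diadem (hv S hS), fun ⟨u, ⟨T, hT, huT⟩, huv⟩ => ?_⟩
  exact (isCritIndep_iff.1 hT.1).1 u huT v (hv T hT) huv

lemma IsMaxCritIndep.subset_union_nbhd {S T : Set V} (hS : IsMaxCritIndep G S)
    (hT : IsCritIndep G T) : T ⊆ S ∪ nbhd G S := by
  obtain ⟨hSi, hSc⟩ := isCritIndep_iff.1 hS.1
  obtain ⟨hTi, hTc⟩ := isCritIndep_iff.1 hT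
  -- the vertices of `T` outside `S ∪ N(S)` lie in the critical independent set `Z`
  set Z := (S ∪ T) \ nbhd G (S ∪ T)
  have hZ : IsCritIndep G Z := (hSc.union hTc).isCritIndep_diff_nbhd
  have hZS : Z ⊆ S := hS.subset_of_isIndep_union hZ <| hSi.union (isCritIndep_iff.1 hZ).1 <|
    disjoint_left.2 fun v hv hvS => hv.2 (nbhd_mono subset_union_left hvS)
  intro v hvT
  by_contra hv
  rw [mem_union, not_or] at hv
  refine hv.1 (hZS ⟨Or.inr hvT, ?_⟩)
  rw [nbhd_union]
  rintro (hvS | hvT')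
  · exact hv.2 hvS
  · exact disjoint_left.1 hTi.disjoint_nbhd hvT hvT'

lemma IsMaxCritIndep.ncard_inter_nbhd_diadem {S : Set V} (hS : IsMaxCritIndep G S) :
    (S ∩ nbhd G (diadem G)).ncard = ((diadem G ∩ nbhd G (diadem G)) \ S).ncard := by
  obtain ⟨hSi, hSc⟩ := isCritIndep_iff.1 hS.1
  have hSD := hS.subset_diadem
  obtain ⟨g, hg_inj, hg⟩ := (isCrit_diadem G).exists_injOn_nbhd
  obtain ⟨f, hf_inj, hf⟩ := hSc.exists_injOn_nbhd
  have hBS : (diadem G ∩ nbhd G (diadem G)) \ S ⊆ nbhd G S := by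
    rintro b ⟨⟨⟨T, hT, hbT⟩, -⟩, hbS⟩
    exact (hS.subset_union_nbhd hT.1 hbT).resolve_left hbS
  refine le_antisymm (ncard_le_ncard_of_injOn g (fun a ha => ?_) (hg_inj.mono inter_subset_right))
    (ncard_le_ncard_of_injOn f (fun b hb => ?_) (hf_inj.mono hBS))
  · obtain ⟨hgD, hadj⟩ := hg a ha.2
    exact ⟨⟨hgD, a, hSD ha.1, hadj⟩, fun hgS => hSi a ha.1 (g a) hgS hadj⟩
  · obtain ⟨hfS, hadj⟩ := hf b (hBS hb)
    exact ⟨hfS, b, hb.1.1, hadj⟩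

lemma IsMaxCritIndep.ncard_diadem_add_ncard_nucleus {S : Set V} (hS : IsMaxCritIndep G S) :
    (diadem G).ncard + (nucleus G).ncard = 2 * S.ncard := by
  have hSD := hS.subset_diadem
  have hS_diff : S \ nbhd G (diadem G) = diadem G \ nbhd G (diadem G) :=
    Subset.antisymm (sdiff_subset_sdiff_left hSD)
      fun v hv => ⟨hS.diadem_diff_nbhd_subset hv, hv.2⟩
  have hB_inter : (diadem G ∩ nbhd G (diadem G)) ∩ S = S ∩ nbhd G (diadem G) := by
    rw [inter_comm, ← inter_assoc, inter_eq_left.2 hSD]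
  have hD := ncard_inter_add_ncard_sdiff_eq_ncard (diadem G) (nbhd G (diadem G))
  have hB := ncard_inter_add_ncard_sdiff_eq_ncard (diadem G ∩ nbhd G (diadem G)) S
  have hS' := ncard_inter_add_ncard_sdiff_eq_ncard S (nbhd G (diadem G))
  rw [hB_inter] at hB
  rw [hS_diff] at hS'
  rw [nucleus_eq_diadem_diff_nbhd]
  have := hS.ncard_inter_nbhd_diadem
  omega

lemma IsIndep.ncard_le_alpha {S : Set V} (hS : IsIndep G S) : S.ncard ≤ alpha G := by
  refine le_csSup ⟨Nat.card V, ?_⟩ ⟨S, subset_univ S, hS, rfl⟩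
  rintro _ ⟨T, -, -, rfl⟩
  exact ncard_le_card T

lemma exists_isIndep_ncard_eq_alpha (G : SimpleGraph V) :
    ∃ S, IsIndep G S ∧ S.ncard = alpha G := by
  set sizes := {n | ∃ S ⊆ univ, IsIndep G S ∧ S.ncard = n}
  have hne : sizes.Nonempty := ⟨0, ∅, empty_subset _, by simp [IsIndep]⟩
  have hbdd : BddAbove sizes := by
    refine ⟨Nat.card V, ?_⟩
    rintro _ ⟨T, -, -, rfl⟩
    exact ncard_le_card T
  obtain ⟨S, -, hS, hcard⟩ := Nat.sSup_mem hne hbdd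
  exact ⟨S, hS, hcard⟩

lemma IsIndep.union_nbhd_eq_univ {S : Set V} (hS : IsIndep G S) (hcard : S.ncard = alpha G) :
    S ∪ nbhd G S = univ := by
  refine eq_univ_of_forall fun v => by_contra fun hv => ?_
  rw [mem_union, not_or] at hv
  have hindep : IsIndep G (S ∪ {v}) :=
    hS.union (fun _ ha _ hb => by rw [ha, hb]; exact G.loopless.irrefl v)
      (disjoint_singleton_left.2 hv.2)
  have := hindep.ncard_le_alpha
  rw [union_singleton, ncard_insert_of_notMem hv.1] at this
  omega

lemma SimpleGraph.Subgraph.IsMatching.ncard_edgeSet_le_mu {M : G.Subgraph} (hM : M.IsMatching) :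
    M.edgeSet.ncard ≤ mu G := by
  refine le_csSup ⟨Nat.card (Sym2 V), ?_⟩ ⟨M, hM, rfl⟩
  rintro _ ⟨M', -, rfl⟩
  exact ncard_le_card _

lemma exists_isMatching_ncard_eq_mu (G : SimpleGraph V) :
    ∃ M : G.Subgraph, M.IsMatching ∧ M.edgeSet.ncard = mu G := by
  set sizes := {n | ∃ M : G.Subgraph, M.IsMatching ∧ M.edgeSet.ncard = n}
  have hne : sizes.Nonempty := ⟨0, ⊥, fun v hv => hv.elim, by simp⟩
  have hbdd : BddAbove sizes := by
    refine ⟨Nat.card (Sym2 V), ?_⟩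
    rintro _ ⟨M, -, rfl⟩
    exact ncard_le_card _
  exact Nat.sSup_mem hne hbdd

lemma SimpleGraph.Subgraph.IsMatching.ncard_verts {M : G.Subgraph} (hM : M.IsMatching) :
    M.verts.ncard = 2 * M.edgeSet.ncard := by
  classical
  have := Fintype.ofFinite V
  have hdeg (v : M.verts) : M.coe.degree v = 1 := by
    rw [SimpleGraph.Subgraph.coe_degree]
    convert (SimpleGraph.Subgraph.isMatching_iff_forall_degree.1 hM) v v.2
  have hsum := M.coe.sum_degrees_eq_twice_card_edges
  rw [Finset.sum_congr rfl fun v _ => by convert hdeg v, Finset.sum_const, smul_eq_mul, mul_one,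
    Finset.card_univ] at hsum
  rw [← Nat.card_coe_set_eq, Nat.card_eq_fintype_card, hsum,
    ← SimpleGraph.Subgraph.image_coe_edgeSet_coe,
    ncard_image_of_injective _ (Sym2.map.injective Subtype.val_injective),
    ← SimpleGraph.coe_edgeFinset, ncard_coe_finset]

/-- Each matched vertex of `X` is charged to its partner in `N(X)`, each other one to `Xᶜ`. -/
lemma SimpleGraph.Subgraph.IsMatching.ncard_verts_le {M : G.Subgraph} (hM : M.IsMatching)
    (X : Set V) : M.verts.ncard ≤ Xᶜ.ncard + (nbhd G X).ncard := by
  classical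
  choose p hp using fun v : V => (em (v ∈ M.verts)).elim (fun hv => (hM hv).exists.imp
    fun _ h _ => h) fun hv => ⟨v, fun h => (hv h).elim⟩
  have hin : (M.verts ∩ X).ncard ≤ (nbhd G X).ncard :=
    ncard_le_ncard_of_injOn p (fun v hv => ⟨v, hv.2, M.adj_sub (hp v hv.1)⟩)
      fun v hv w hw hvw => hM.eq_of_adj_right (hp v hv.1) (hvw ▸ hp w hw.1)
  have hout : (M.verts \ X).ncard ≤ Xᶜ.ncard := ncard_le_ncard fun v hv => hv.2
  have := ncard_inter_add_ncard_sdiff_eq_ncard M.verts X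
  omega

lemma dG_le_card_sub_two_mul_mu (X : Set V) : dG G X ≤ Nat.card V - 2 * mu G := by
  obtain ⟨M, hM, hcard⟩ := exists_isMatching_ncard_eq_mu G
  have hverts := hM.ncard_verts_le X
  have hcompl := ncard_add_ncard_compl X
  rw [hM.ncard_verts, hcard] at hverts
  rw [dG_eq]
  omega

lemma IsIndep.two_mul_ncard_sub_card_le_dG {S : Set V} (hS : IsIndep G S) :
    2 * S.ncard - Nat.card V ≤ dG G S := by
  have hnbhd : (nbhd G S).ncard ≤ Sᶜ.ncard :=
    ncard_le_ncard fun v hv hvS => disjoint_left.1 hS.disjoint_nbhd hvS hv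
  have hcompl := ncard_add_ncard_compl S
  rw [dG_eq]
  omega

lemma alpha_add_mu_le (G : SimpleGraph V) : alpha G + mu G ≤ Nat.card V := by
  obtain ⟨S, hS, hcard⟩ := exists_isIndep_ncard_eq_alpha G
  have := hS.two_mul_ncard_sub_card_le_dG.trans (dG_le_card_sub_two_mul_mu S)
  omega

lemma IsCritIndep.ncard_nbhd_le_mu {S : Set V} (hS : IsCritIndep G S) :
    (nbhd G S).ncard ≤ mu G := by
  obtain ⟨hSi, hSc⟩ := isCritIndep_iff.1 hS
  obtain ⟨f, hf_inj, hf⟩ := hSc.exists_injOn_nbhd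
  have hdisj : Disjoint (nbhd G S) (f '' nbhd G S) :=
    disjoint_right.2 fun _ ⟨a, ha, hfa⟩ hN =>
      disjoint_left.1 hSi.disjoint_nbhd (hfa ▸ (hf a ha).1) hN
  obtain ⟨M, hverts, hM⟩ := SimpleGraph.Subgraph.IsMatching.exists_of_disjoint_sets_of_equiv
    hdisj (Equiv.Set.imageOfInjOn f _ hf_inj) fun a => (hf a a.2).2
  have := hM.ncard_verts
  rw [hverts, ncard_union_eq hdisj, hf_inj.ncard_image] at this
  linarith [hM.ncard_edgeSet_le_mu]

end

lemma IsMaxCritIndep.isKE_iff {G : SimpleGraph V} {S : Set V} (hS : IsMaxCritIndep G S) :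
    IsKE G ↔ S.ncard = alpha G := by
  obtain ⟨hSi, -⟩ := isCritIndep_iff.1 hS.1
  have hle := alpha_add_mu_le G
  rw [IsKE, ← Nat.card_eq_fintype_card]
  constructor
  · intro hKE
    obtain ⟨T, hT, hTcard⟩ := exists_isIndep_ncard_eq_alpha G
    have hTcrit : IsCrit G T := fun X =>
      (dG_le_card_sub_two_mul_mu X).trans (by linarith [hT.two_mul_ncard_sub_card_le_dG])
    have := hS.2 T (isCritIndep_iff.2 ⟨hT, hTcrit⟩)
    exact le_antisymm hSi.ncard_le_alpha (hTcard ▸ this)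
  · intro hcard
    have hcover := ncard_union_eq hSi.disjoint_nbhd
    rw [hSi.union_nbhd_eq_univ hcard, ncard_univ] at hcover
    have := IsCritIndep.ncard_nbhd_le_mu hS.1
    omega

/-- `G` is König-Egerváry iff `|diadem(G)| + |nucleus(G)| = 2α(G)`. -/
theorem stmt13 (G : SimpleGraph V) :
    IsKE G ↔ (diadem G).ncard + (nucleus G).ncard = 2 * alpha G := by
  obtain ⟨S, hS⟩ := exists_isMaxCritIndep G
  rw [hS.isKE_iff, hS.ncard_diadem_add_ncard_nucleus]
  omega
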